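/- arXiv:math/0305300 — 3 statements merged into one kernel-verified Lean document; each statement's English description precedes it below -/
import Mathlib

section
/- For every graph G without isolated vertices, the polyhedral complex Hom(K_2, G) is homotopy equivalent to the neighborhood complex N(G). -/
open scoped Topology

/-- A cell of the Lovász `Hom` complex of multihomomorphisms between two graphs,
given by adjacency relations `A` and `B`: a function assigning to each vertex a
nonempty set of vertices such that adjacent vertices get completely adjacent sets. -/
@[ext]
structure HomCell {V W : Type*} (A : V → V → Prop) (B : W → W → Prop) where
  η : V → Set W
  nonempty : ∀ v, (η v).Nonempty
  adj : ∀ ⦃x y⦄, A x y → ∀ a ∈ η x, ∀ b ∈ η y, B a b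

namespace HomCell

variable {U V W : Type*} {A : V → V → Prop} {B : W → W → Prop}

theorem eta_injective : Function.Injective (HomCell.η (A := A) (B := B)) := by
  rintro ⟨f, _, _⟩ ⟨g, _, _⟩ h
  simpa using h

/-- Cells are ordered by pointwise inclusion (the face order of the `Hom` complex). -/
instance : PartialOrder (HomCell A B) := PartialOrder.lift HomCell.η eta_injective

theorem le_def {c d : HomCell A B} : c ≤ d ↔ ∀ v, c.η v ⊆ d.η v := Iff.rfl

noncomputable instance [Finite V] [Finite W] : Fintype (HomCell A B) := by
  classical
  have : Finite (HomCell A B) := Finite.of_injective _ (eta_injective (A := A) (B := B))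
  exact Fintype.ofFinite _

noncomputable instance : DecidableEq (HomCell A B) := Classical.decEq _

/-- Precomposition with a graph homomorphism `φ : (U,A') → (V,A)`: the induced
cellular (monotone) map `Hom(V,W) → Hom(U,W)`; this is the contravariant functoriality
of `Hom(-,H)`. -/
def pull {A' : U → U → Prop} (φ : U → V) (hφ : ∀ ⦃x y⦄, A' x y → A (φ x) (φ y)) :
    HomCell A B →o HomCell A' B where
  toFun c :=
    { η := fun u => c.η (φ u)
      nonempty := fun u => c.nonempty (φ u)
      adj := fun _ _ hxy => c.adj (hφ hxy) }
  monotone' := fun _ _ h u => h (φ u)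

/-- Postcomposition with a graph homomorphism `φ : (V,B) → (W,B')`: the induced
cellular (monotone) map `Hom(U,V) → Hom(U,W)`; this is the covariant functoriality
of `Hom(G,-)`. -/
def push {U₀ V₀ W₀ : Type*} {A₀ : U₀ → U₀ → Prop} {B₀ : V₀ → V₀ → Prop}
    {B₀' : W₀ → W₀ → Prop} (φ : V₀ → W₀)
    (hφ : ∀ ⦃x y⦄, B₀ x y → B₀' (φ x) (φ y)) (c : HomCell A₀ B₀) : HomCell A₀ B₀' where
  η v := φ '' c.η v
  nonempty v := (c.nonempty v).image φ
  adj := by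
    rintro x y hxy a ⟨a', ha', rfl⟩ b ⟨b', hb', rfl⟩
    exact hφ (c.adj hxy a' ha' b' hb')

end HomCell

/-- The geometric realization of the order complex of a preorder `P`:
formal convex combinations supported on finite chains of `P`. -/
def OrderComplex (P : Type*) [Preorder P] : Type _ :=
  { f : P → ℝ // (∀ x, 0 ≤ f x) ∧ HasSum f 1 ∧ IsChain (· ≤ ·) {x | f x ≠ 0} }

instance (P : Type*) [Preorder P] : TopologicalSpace (OrderComplex P) :=
  instTopologicalSpaceSubtype

/-- The topological space underlying the Lovász complex `Hom(G,H)` for graphs given by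
adjacency relations `A`, `B`: the (realization of the) poset of multihomomorphism cells. -/
def HomComplex {V W : Type*} (A : V → V → Prop) (B : W → W → Prop) : Type _ :=
  OrderComplex (HomCell A B)

instance {V W : Type*} (A : V → V → Prop) (B : W → W → Prop) :
    TopologicalSpace (HomComplex A B) := instTopologicalSpaceSubtype

/-- The simplicial map on order complexes induced by a monotone map of posets:
barycentric pushforward of weights. -/
noncomputable def OrderHom.realize {P Q : Type*} [Preorder P] [Preorder Q] [Fintype P]
    [DecidableEq Q] (φ : P →o Q) : C(OrderComplex P, OrderComplex Q) where
  toFun x := by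
    refine ⟨fun q => ∑ p ∈ Finset.univ.filter (fun p => φ p = q), x.1 p, ?_, ?_, ?_⟩
    · intro q
      exact Finset.sum_nonneg fun p _ => x.2.1 p
    · have h1 : ∑ p, x.1 p = 1 := (hasSum_fintype x.1).unique x.2.2.1
      have key : ∀ q ∉ Finset.univ.image φ,
          (∑ p ∈ Finset.univ.filter (fun p => φ p = q), x.1 p) = 0 := by
        intro q hq
        apply Finset.sum_eq_zero
        intro p hp
        simp only [Finset.mem_filter] at hp
        exact absurd (Finset.mem_image.mpr ⟨p, Finset.mem_univ p, hp.2⟩) hq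
      have := hasSum_sum_of_ne_finset_zero (L := SummationFilter.unconditional Q) (s := Finset.univ.image φ)
        (f := fun q => ∑ p ∈ Finset.univ.filter (fun p => φ p = q), x.1 p) key
      have h2 : (∑ q ∈ Finset.univ.image φ,
          ∑ p ∈ Finset.univ.filter (fun p => φ p = q), x.1 p) = ∑ p, x.1 p :=
        Finset.sum_fiberwise_of_maps_to
          (fun p _ => Finset.mem_image_of_mem φ (Finset.mem_univ p)) _
      rwa [h2, h1] at this
    · intro q1 hq1 q2 hq2 hne
      simp only [Set.mem_setOf_eq] at hq1 hq2
      obtain ⟨p1, hp1, hxp1⟩ : ∃ p, φ p = q1 ∧ x.1 p ≠ 0 := by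
        by_contra h
        push_neg at h
        exact hq1 (Finset.sum_eq_zero fun p hp => by
          simp only [Finset.mem_filter] at hp
          exact h p hp.2)
      obtain ⟨p2, hp2, hxp2⟩ : ∃ p, φ p = q2 ∧ x.1 p ≠ 0 := by
        by_contra h
        push_neg at h
        exact hq2 (Finset.sum_eq_zero fun p hp => by
          simp only [Finset.mem_filter] at hp
          exact h p hp.2)
      have hp12 : p1 ≠ p2 := fun h => hne (hp1 ▸ hp2 ▸ h ▸ rfl)
      rcases x.2.2.2 hxp1 hxp2 hp12 with h | h
      · exact Or.inl (hp1 ▸ hp2 ▸ φ.monotone h)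
      · exact Or.inr (hp2 ▸ hp1 ▸ φ.monotone h)
  continuous_toFun := by
    apply Continuous.subtype_mk
    apply continuous_pi
    intro q
    exact continuous_finset_sum _ fun p _ => (continuous_apply p).comp continuous_subtype_val

/-- The geometric realization of the Lovász neighborhood complex `N(G)`:
formal convex combinations of vertices supported on sets with a common neighbor. -/
def NbhdComplex {V : Type*} (G : SimpleGraph V) : Type _ :=
  { f : V → ℝ // (∀ x, 0 ≤ f x) ∧ HasSum f 1 ∧ ∃ v, ∀ w, f w ≠ 0 → G.Adj v w }

instance {V : Type*} (G : SimpleGraph V) : TopologicalSpace (NbhdComplex G) :=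
  instTopologicalSpaceSubtype


/-!
Both sides are compared with the order complex of Lovász's poset `L` of closed faces of the
neighbourhood complex, the sets `S = N(N(S))` where `N` takes common neighbourhoods.

The barycentric subdivision identifies `N(G)` with the order complex of its face poset, and the
closure `S ↦ N(N(S))` retracts that onto `L`: monotone maps `f ≤ g` have homotopic realizations.
Closing both sides of a cell retracts `Hom(K₂, G)` in the same way onto the cells `(A, B)` with
`A` and `B` closed, and these are exactly the intervals `[A, N(B)]` of `L`. Finally, the order
complex of the poset of intervals of a finite poset is homeomorphic to that of the poset
(edgewise subdivision): an interval goes to its midpoint, and the inverse folds a chain in half.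
-/

open Finset Function ContinuousMap

section

variable {α β : Type*}

theorem IsChain.exists_isGreatest [PartialOrder α] {s : Set α} (hc : IsChain (· ≤ ·) s)
    (hs : s.Finite) (hne : s.Nonempty) : ∃ m, IsGreatest s m := by
  obtain ⟨m, hm⟩ := hs.exists_maximal hne
  exact ⟨m, hm.prop, fun q hq => (hc.total hq hm.prop).elim id (hm.le_of_ge hq)⟩

theorem IsChain.exists_isLeast [PartialOrder α] {s : Set α} (hc : IsChain (· ≤ ·) s)
    (hs : s.Finite) (hne : s.Nonempty) : ∃ m, IsLeast s m :=
  IsChain.exists_isGreatest (α := αᵒᵈ) hc.symm hs hne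

theorem induction_of_ssubset [Finite α] {m : β → Set α} {P : β → Prop} (b : β)
    (ind : ∀ b, (∀ b', m b' ⊂ m b → P b') → P b) : P b :=
  (measure fun b => (m b).ncard).wf.induction b fun b ih =>
    ind b fun b' h => ih b' (Set.ncard_lt_ncard h)

end

namespace OrderComplex

variable {P : Type*} [Preorder P]

theorem isChain_support (x : OrderComplex P) : IsChain (· ≤ ·) (support x.1) := x.2.2.2

theorem continuous_apply' (p : P) : Continuous fun x : OrderComplex P => x.1 p :=
  (continuous_apply p).comp continuous_subtype_val

theorem sum_eq_one [Fintype P] (x : OrderComplex P) : ∑ p, x.1 p = 1 :=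
  (hasSum_fintype x.1).unique x.2.2.1

theorem support_nonempty [Fintype P] (x : OrderComplex P) : (support x.1).Nonempty := by
  by_contra h
  have := x.sum_eq_one
  simp_all

def mk [Fintype P] (f : P → ℝ) (h0 : ∀ p, 0 ≤ f p) (h1 : ∑ p, f p = 1)
    (hc : IsChain (· ≤ ·) (support f)) : OrderComplex P :=
  ⟨f, h0, h1 ▸ hasSum_fintype f, hc⟩

theorem homotopic_of_isChain_union {X : Type*} [TopologicalSpace X] (f g : C(X, OrderComplex P))
    (h : ∀ x, IsChain (· ≤ ·) (support (f x).1 ∪ support (g x).1)) : f.Homotopic g := by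
  refine ⟨⟨⟨fun tx => ⟨fun p => (1 - tx.1 : ℝ) * (f tx.2).1 p + tx.1 * (g tx.2).1 p,
      fun p => ?_, ?_, (h tx.2).mono fun p hp => ?_⟩, ?_⟩, fun x => ?_, fun x => ?_⟩⟩
  · exact add_nonneg (mul_nonneg (sub_nonneg.2 (unitInterval.le_one _)) ((f tx.2).2.1 p))
      (mul_nonneg (unitInterval.nonneg _) ((g tx.2).2.1 p))
  · simpa using ((f tx.2).2.2.1.mul_left (1 - tx.1 : ℝ)).add ((g tx.2).2.2.1.mul_left (tx.1 : ℝ))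
  · by_contra hp'
    simp only [Set.mem_union, mem_support, not_or, not_not] at hp'
    simp [hp'.1, hp'.2] at hp
  · refine Continuous.subtype_mk (continuous_pi fun p => ?_) _
    have ht : Continuous fun tx : unitInterval × X => (tx.1 : ℝ) :=
      continuous_subtype_val.comp continuous_fst
    exact ((continuous_const.sub ht).mul ((continuous_apply' p).comp (f.2.comp continuous_snd))).add
      (ht.mul ((continuous_apply' p).comp (g.2.comp continuous_snd)))
  · exact Subtype.ext <| funext fun p => by simp
  · exact Subtype.ext <| funext fun p => by simp

def dualHomeomorph : OrderComplex Pᵒᵈ ≃ₜ OrderComplex P where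
  toFun x := ⟨x.1, x.2.1, x.2.2.1, x.2.2.2.symm⟩
  invFun x := ⟨x.1, x.2.1, x.2.2.1, x.2.2.2.symm⟩
  continuous_toFun := continuous_subtype_val.subtype_mk _
  continuous_invFun := continuous_subtype_val.subtype_mk _

end OrderComplex

namespace OrderHom

section Preorder

variable {P Q R : Type*} [Preorder P] [Preorder Q] [Preorder R] [Fintype P]

theorem realize_apply [DecidableEq Q] (φ : P →o Q) (x : OrderComplex P) (q : Q) :
    (φ.realize x).1 q = ∑ p ∈ univ.filter (φ · = q), x.1 p := rfl

theorem support_realize_subset [DecidableEq Q] (φ : P →o Q) (x : OrderComplex P) :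
    support (φ.realize x).1 ⊆ φ '' support x.1 := fun q hq => by
  obtain ⟨p, hp, hne⟩ := exists_ne_zero_of_sum_ne_zero hq
  exact ⟨p, hne, (mem_filter.mp hp).2⟩

theorem realize_id [DecidableEq P] : (OrderHom.id : P →o P).realize = ContinuousMap.id _ := by
  ext x : 1
  refine Subtype.ext <| funext fun q => ?_
  simp [realize_apply, filter_eq']

theorem realize_comp [Fintype Q] [DecidableEq Q] [DecidableEq R] (ψ : Q →o R) (φ : P →o Q) :
    (ψ.comp φ).realize = ψ.realize.comp φ.realize := by
  ext x : 1
  refine Subtype.ext <| funext fun r => ?_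
  simp only [ContinuousMap.comp_apply, realize_apply, comp_coe, Function.comp_apply]
  rw [← sum_fiberwise_of_maps_to (g := φ) (t := univ.filter (ψ · = r)) (by simp)]
  refine sum_congr rfl fun q hq => sum_congr ?_ fun _ _ => rfl
  ext p
  simp_all

theorem realize_homotopic_of_comparable [DecidableEq Q] (φ χ : P →o Q)
    (hcomp : ∀ p p', p ≤ p' ∨ p' ≤ p → φ p ≤ χ p' ∨ χ p' ≤ φ p) :
    φ.realize.Homotopic χ.realize := by
  refine OrderComplex.homotopic_of_isChain_union _ _ fun x => ?_
  have hS := fun {p p'} (hp : p ∈ support x.1) (hp' : p' ∈ support x.1) =>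
    x.isChain_support.total hp hp'
  refine IsChain.mono (Set.union_subset_union (φ.support_realize_subset x)
    (χ.support_realize_subset x)) ?_
  rintro _ (⟨p, hp, rfl⟩ | ⟨p, hp, rfl⟩) _ (⟨p', hp', rfl⟩ | ⟨p', hp', rfl⟩) -
  · exact (hS hp hp').imp (φ.mono ·) (φ.mono ·)
  · exact hcomp p p' (hS hp hp')
  · exact (hcomp p' p (hS hp' hp)).symm
  · exact (hS hp hp').imp (χ.mono ·) (χ.mono ·)

end Preorder

variable {P Q : Type*} [PartialOrder P] [PartialOrder Q]

/-- Raise `φ` to `ψ` at a maximal point where they disagree. -/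
theorem exists_comparable_step [Finite P] {φ ψ : P →o Q} (hle : φ ≤ ψ) (hne : φ ≠ ψ) :
    ∃ χ : P →o Q, χ ≤ ψ ∧ {p | χ p ≠ ψ p} ⊂ {p | φ p ≠ ψ p} ∧
      ∀ p p', p ≤ p' ∨ p' ≤ p → φ p ≤ χ p' ∨ χ p' ≤ φ p := by
  classical
  obtain ⟨p₀, hp₀⟩ := (Set.toFinite {p | φ p ≠ ψ p}).exists_maximal
    (by simpa [Set.Nonempty, DFunLike.ext_iff] using hne)
  have above : ∀ r, p₀ < r → φ r = ψ r := fun r hr => by_contra fun h =>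
    hr.not_ge (hp₀.le_of_ge h hr.le)
  let χ : P →o Q := ⟨fun r => if r = p₀ then ψ p₀ else φ r, fun r s hrs => by
    dsimp only
    split_ifs with hr hs hs
    · exact le_rfl
    · subst hr; exact (ψ.mono hrs).trans_eq (above s (lt_of_le_of_ne hrs (Ne.symm hs))).symm
    · subst hs; exact (φ.mono hrs).trans (hle _)
    · exact φ.mono hrs⟩
  have hχ : ∀ r, χ r = if r = p₀ then ψ p₀ else φ r := fun _ => rfl
  refine ⟨χ, fun r => ?_, ?_, fun p p' hpp' => ?_⟩
  · by_cases hr : r = p₀ <;> simp [hχ, hr, hle r]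
  · refine ⟨fun r hr => ?_, fun h => by simpa [hχ] using h hp₀.prop⟩
    by_cases h : r = p₀ <;> simp_all
  · by_cases hp' : p' = p₀
    · subst hp'
      simp only [hχ, if_true]
      rcases hpp' with h | h
      · exact Or.inl ((φ.mono h).trans (hle _))
      · rcases h.lt_or_eq with h | rfl
        · exact Or.inr ((ψ.mono h.le).trans_eq (above p h).symm)
        · exact Or.inl (hle _)
    · simpa [hχ, hp'] using hpp'.imp (φ.mono ·) (φ.mono ·)

theorem realize_homotopic_of_le [Fintype P] [DecidableEq Q] {φ ψ : P →o Q} (hle : φ ≤ ψ) :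
    φ.realize.Homotopic ψ.realize := by
  induction φ using induction_of_ssubset (m := fun φ : P →o Q => {p | φ p ≠ ψ p}) with
  | ind φ ih => ?_
  by_cases hne : φ = ψ
  · exact hne ▸ Homotopic.refl _
  obtain ⟨χ, hχψ, hss, hcomp⟩ := exists_comparable_step hle hne
  exact (realize_homotopic_of_comparable φ χ hcomp).trans (ih χ hss hχψ)

end OrderHom

noncomputable def OrderComplex.homeomorphOfOrderIso {P Q : Type*} [PartialOrder P]
    [PartialOrder Q] [Fintype P] [Fintype Q] [DecidableEq P] [DecidableEq Q] (e : P ≃o Q) :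
    OrderComplex P ≃ₜ OrderComplex Q where
  toFun := (e : P →o Q).realize
  invFun := (e.symm : Q →o P).realize
  left_inv x := by
    rw [← ContinuousMap.comp_apply, ← OrderHom.realize_comp,
      show (e.symm : Q →o P).comp e = .id from OrderHom.ext _ _ (funext e.symm_apply_apply),
      OrderHom.realize_id, ContinuousMap.id_apply]
  right_inv x := by
    rw [← ContinuousMap.comp_apply, ← OrderHom.realize_comp,
      show (e : P →o Q).comp e.symm = .id from OrderHom.ext _ _ (funext e.apply_symm_apply),
      OrderHom.realize_id, ContinuousMap.id_apply]

noncomputable def ClosureOperator.orderComplexHomotopyEquiv {Q : Type*} [PartialOrder Q]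
    [Fintype Q] [DecidableEq Q] (c : ClosureOperator Q) [Fintype c.Closeds] :
    OrderComplex Q ≃ₕ OrderComplex c.Closeds := by
  let r : Q →o c.Closeds := ⟨c.toCloseds, fun _ _ h => c.monotone h⟩
  let i : c.Closeds →o Q := ⟨Subtype.val, fun _ _ h => h⟩
  have hri : r.comp i = OrderHom.id :=
    OrderHom.ext _ _ (funext fun x => Subtype.ext (c.isClosed_iff.mp x.2))
  refine ⟨r.realize, i.realize, ?_, ?_⟩
  · rw [← OrderHom.realize_comp, ← OrderHom.realize_id]
    exact (OrderHom.realize_homotopic_of_le c.le_closure).symm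
  · rw [← OrderHom.realize_comp, hri, OrderHom.realize_id]

open scoped Classical

theorem Finset.inf'_add_ite_of_subset {W : Type*} {f : W → ℝ} {s T : Finset W} {v : ℝ}
    (hs : s.Nonempty) (hsT : s ⊆ T) :
    s.inf' hs (fun w => f w + if w ∈ T then v else 0) = s.inf' hs f + v := by
  rw [inf'_congr hs rfl fun w hw => by rw [if_pos (hsT hw)]]
  exact (map_finset_inf' (OrderHom.mk (· + v) fun _ _ h => by simpa using h) hs f).symm

section Levels

variable {W : Type*} [Fintype W]

/-- The largest value of `f` off `s`, and `0` if there is none or it is negative. -/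
noncomputable def Finset.offMax (s : Finset W) (f : W → ℝ) : ℝ := (univ \ s).fold max 0 f

theorem Finset.offMax_nonneg (s : Finset W) (f : W → ℝ) : 0 ≤ s.offMax f :=
  (le_fold_max _).2 (Or.inl le_rfl)

theorem Finset.le_offMax {s : Finset W} (f : W → ℝ) {w : W} (hw : w ∉ s) : f w ≤ s.offMax f :=
  (le_fold_max _).2 (Or.inr ⟨w, by simpa using hw, le_rfl⟩)

theorem Finset.offMax_le {s : Finset W} {f : W → ℝ} {c : ℝ} (hc : 0 ≤ c)
    (h : ∀ w ∉ s, f w ≤ c) : s.offMax f ≤ c :=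
  (fold_max_le _).2 ⟨hc, fun w hw => h w (mem_sdiff.1 hw).2⟩

theorem Finset.continuous_offMax {X : Type*} [TopologicalSpace X] (s : Finset W)
    {f : X → W → ℝ} (hf : ∀ w, Continuous (f · w)) : Continuous fun x => s.offMax (f x) := by
  unfold Finset.offMax
  induction univ \ s using Finset.induction_on with
  | empty => exact continuous_const
  | insert w t hw ih => simpa only [fold_insert hw] using (hf w).max ih

/-- Removing the lowest level `v = min f` from a nonnegative function shrinks its support. -/
theorem exists_eq_add_const_on_support {f : W → ℝ} (h0 : ∀ w, 0 ≤ f w) (hf : f ≠ 0) :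
    ∃ (f' : W → ℝ) (T : Finset W) (v : ℝ), ↑T = support f ∧ 0 < v ∧ (∀ w, 0 ≤ f' w) ∧
      support f' ⊂ support f ∧ f = fun w => f' w + if w ∈ T then v else 0 := by
  set T := univ.filter (f · ≠ 0)
  have hT : ↑T = support f := by ext; simp [T]
  obtain ⟨w₀, hw₀, hmin⟩ := exists_mem_eq_inf' (s := T) (by
    obtain ⟨w, hw⟩ := Function.ne_iff.1 hf
    exact ⟨w, by simpa [T] using hw⟩) f
  have hw₀' : f w₀ ≠ 0 := by simpa [T] using hw₀
  have hle : ∀ w ∈ T, f w₀ ≤ f w := fun w hw => hmin ▸ inf'_le f hw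
  refine ⟨fun w => f w - if w ∈ T then f w₀ else 0, T, f w₀, hT, (h0 w₀).lt_of_ne' hw₀',
    fun w => ?_, ⟨fun w hw => by_contra fun h => hw ?_, fun h => ?_⟩, funext fun w => by ring⟩
  · dsimp only
    split_ifs with hw
    · exact sub_nonneg.2 (hle w hw)
    · simpa using h0 w
  · simp_all [T]
  · exact h hw₀' (by simp [hw₀])

variable {f : W → ℝ} {s T : Finset W} {v : ℝ}

theorem Finset.offMax_eq_zero (hfs : support f ⊆ s) : s.offMax f = 0 :=
  le_antisymm (offMax_le le_rfl fun _ hw => (not_not.1 fun h => hw (hfs h)).le)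
    (offMax_nonneg s f)

theorem Finset.offMax_add_ite_of_ssubset (h0 : ∀ w, 0 ≤ f w) (hfT : support f ⊆ T)
    (hv : 0 ≤ v) (hsT : s ⊂ T) :
    s.offMax (fun w => f w + if w ∈ T then v else 0) = s.offMax f + v := by
  have off_T : ∀ w ∉ T, f w = 0 := fun w hw => not_not.1 fun h => hw (hfT h)
  obtain ⟨w₁, hw₁T, hw₁s⟩ := exists_of_ssubset hsT
  refine le_antisymm (offMax_le (by linarith [offMax_nonneg s f]) fun w hw => ?_) ?_
  · by_cases hwT : w ∈ T
    · simpa [hwT] using le_offMax f hw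
    · simp [hwT, off_T w hwT, add_nonneg (offMax_nonneg s f) hv]
  · have hv₁ : v ≤ s.offMax (fun w => f w + if w ∈ T then v else 0) :=
      (le_add_of_nonneg_left (h0 w₁)).trans
        (by simpa [hw₁T] using le_offMax (fun w => f w + if w ∈ T then v else 0) hw₁s)
    refine le_sub_iff_add_le.1 (offMax_le (sub_nonneg.2 hv₁) fun w hw => ?_)
    by_cases hwT : w ∈ T
    · have := le_offMax (fun w => f w + if w ∈ T then v else 0) hw
      simp only [hwT, if_true] at this
      linarith
    · simpa [off_T w hwT] using hv₁

theorem Finset.inf'_sub_offMax_nonpos (hs : s.Nonempty) {w : W} (hw : w ∈ s) (hfw : f w = 0) :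
    s.inf' hs f - s.offMax f ≤ 0 :=
  sub_nonpos.2 ((inf'_le f hw).trans (hfw ▸ offMax_nonneg s f))

noncomputable def Finset.uniformWeights (s : Finset W) (w : W) : ℝ :=
  if w ∈ s then (#s : ℝ)⁻¹ else 0

theorem Finset.sum_uniformWeights (hs : s.Nonempty) : ∑ w, s.uniformWeights w = 1 := by
  simp [Finset.uniformWeights, Finset.sum_ite_mem, (card_pos.2 hs).ne']

end Levels

namespace PreAbstractSimplicialComplex

variable {W : Type*} (K : PreAbstractSimplicialComplex W)

theorem nonempty_of_mem {s : Finset W} (hs : s ∈ K) : s.Nonempty := (K.isRelLowerSet_faces hs).1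

theorem mem_of_subset {s t : Finset W} (hs : s ∈ K) (hts : t ⊆ s) (ht : t.Nonempty) : t ∈ K :=
  (K.isRelLowerSet_faces hs).2 hts ht

def Realization : Type _ := {f : W → ℝ // (∀ w, 0 ≤ f w) ∧ HasSum f 1 ∧ ∃ s ∈ K, support f ⊆ s}

instance : TopologicalSpace K.Realization := instTopologicalSpaceSubtype

variable [Fintype W]

/-- Sends a vertex `s` of the barycentric subdivision of `K` to the barycenter of `s`. -/
noncomputable def baryMap : (K → ℝ) →ₗ[ℝ] W → ℝ :=
  Fintype.linearCombination ℝ fun s => (s : Finset W).uniformWeights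

theorem baryMap_apply (x : K → ℝ) (w : W) :
    K.baryMap x w = ∑ s, x s * (s : Finset W).uniformWeights w := by
  simp [baryMap, Fintype.linearCombination_apply, Finset.sum_apply]

theorem baryMap_nonneg {x : K → ℝ} (h0 : ∀ s, 0 ≤ x s) (w : W) : 0 ≤ K.baryMap x w := by
  rw [baryMap_apply]
  refine sum_nonneg fun s _ => mul_nonneg (h0 s) ?_
  unfold Finset.uniformWeights
  positivity

theorem sum_baryMap (x : K → ℝ) : ∑ w, K.baryMap x w = ∑ s, x s := by
  simp_rw [baryMap_apply, sum_comm (γ := W), ← mul_sum, sum_uniformWeights (K.nonempty_of_mem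
    (Subtype.prop _)), mul_one]

theorem support_baryMap_subset (x : K → ℝ) :
    support (K.baryMap x) ⊆ ⋃ s ∈ support x, ((s : Finset W) : Set W) := fun w hw => by
  rw [mem_support, baryMap_apply] at hw
  obtain ⟨s, -, hs⟩ := exists_ne_zero_of_sum_ne_zero hw
  simp only [Set.mem_iUnion]
  refine ⟨s, left_ne_zero_of_mul hs, Finset.mem_coe.2 (by_contra fun h => hs ?_)⟩
  simp [Finset.uniformWeights, h]

theorem baryMap_single (s : K) (a : ℝ) :
    K.baryMap (Pi.single s a) =
      fun w => if w ∈ (s : Finset W) then a / #(s : Finset W) else 0 := by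
  ext w
  simp [baryMap, Fintype.linearCombination_apply_single, Finset.uniformWeights, div_eq_mul_inv]

/-- `#s` times the length of the range of levels `t ≥ 0` with `s = {w | t < f w}`. -/
noncomputable def baryInv (f : W → ℝ) (s : K) : ℝ :=
  #(s : Finset W) *
    max 0 ((s : Finset W).inf' (K.nonempty_of_mem s.2) f - (s : Finset W).offMax f)

variable {K}

theorem baryInv_nonneg (f : W → ℝ) (s : K) : 0 ≤ K.baryInv f s :=
  mul_nonneg (Nat.cast_nonneg _) (le_max_left _ _)

theorem baryInv_zero : K.baryInv 0 = 0 := funext fun s => by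
  simp [baryInv, Finset.offMax_eq_zero (f := 0) (by simp)]

theorem baryInv_add_ite {f : W → ℝ} (h0 : ∀ w, 0 ≤ f w) {T : Finset W} (hfT : support f ⊆ T)
    {v : ℝ} (hv : 0 ≤ v) (s : K) :
    K.baryInv (fun w => f w + if w ∈ T then v else 0) s =
      K.baryInv f s + if (s : Finset W) = T then #T * v else 0 := by
  obtain ⟨s, hsK⟩ := s
  have hs := K.nonempty_of_mem hsK
  have hgT : support (fun w => f w + if w ∈ T then v else 0) ⊆ T := fun w hw =>
    by_contra fun h => hw (by simp [Finset.mem_coe.not.1 h, not_not.1 fun h' => h (hfT h')])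
  simp only [baryInv]
  by_cases hsT : s ⊆ T
  · rw [inf'_add_ite_of_subset hs hsT]
    rcases hsT.eq_or_ssubset with rfl | hssT
    · rw [offMax_eq_zero hfT, offMax_eq_zero hgT, if_pos rfl, sub_zero, sub_zero,
        max_eq_right (le_inf' hs _ fun w _ => h0 w),
        max_eq_right (add_nonneg (le_inf' hs _ fun w _ => h0 w) hv)]
      ring
    · rw [offMax_add_ite_of_ssubset h0 hfT hv hssT, if_neg hssT.ne, add_sub_add_right_eq_sub,
        add_zero]
  · obtain ⟨w, hws, hwT⟩ := not_subset.1 hsT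
    have hfw : f w = 0 := not_not.1 fun h => hwT (hfT h)
    rw [max_eq_left (inf'_sub_offMax_nonpos hs hws (by simp [hwT, hfw])),
      max_eq_left (inf'_sub_offMax_nonpos hs hws hfw), if_neg (fun h => hsT h.le)]
    simp

theorem baryInv_baryMap {x : K → ℝ} (h0 : ∀ s, 0 ≤ x s) (hx : IsChain (· ≤ ·) (support x)) :
    K.baryInv (K.baryMap x) = x := by
  induction x using induction_of_ssubset (m := fun x : K → ℝ => support x) with
  | ind x ih => ?_
  by_cases hx0 : x = 0
  · simp [hx0, baryInv_zero]
  obtain ⟨t, ht, htop⟩ := hx.exists_isGreatest (Set.toFinite _) (support_nonempty_iff.2 hx0)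
  set x' := update x t 0
  have hss : support x' ⊂ support x := by
    rw [support_update_zero]
    exact Set.sdiff_singleton_ssubset.2 ht
  have hx' : x = x' + Pi.single t (x t) := by
    ext s; by_cases hs : s = t <;> simp [x', hs]
  have h0' : ∀ s, 0 ≤ x' s := fun s => by by_cases hs : s = t <;> simp [x', hs, h0 s]
  have hsupp : support (K.baryMap x') ⊆ (t : Finset W) := (support_baryMap_subset K x').trans <|
    Set.iUnion₂_subset fun s hs => Finset.coe_subset.2 (htop (hss.subset hs))
  have hmap : K.baryMap x = fun w => K.baryMap x' w + if w ∈ (t : Finset W) then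
      x t / #(t : Finset W) else 0 := by
    conv_lhs => rw [hx', map_add, baryMap_single]
    rfl
  have hpos : (0 : ℝ) < #(t : Finset W) := by exact_mod_cast card_pos.2 (K.nonempty_of_mem t.2)
  funext s
  rw [hmap, baryInv_add_ite (baryMap_nonneg K h0') hsupp (div_nonneg (h0 t) hpos.le),
    ih x' hss h0' (hx.mono hss.subset)]
  by_cases hs : s = t
  · simp [x', hs, mul_div_cancel₀ _ hpos.ne']
  · simp [x', hs]

theorem baryMap_baryInv {f : W → ℝ} (h0 : ∀ w, 0 ≤ f w) (hf : ∃ s ∈ K, support f ⊆ s) :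
    K.baryMap (K.baryInv f) = f := by
  induction f using induction_of_ssubset (m := fun f : W → ℝ => support f) with
  | ind f ih => ?_
  by_cases hf0 : f = 0
  · simp [hf0, baryInv_zero]
  obtain ⟨s, hsK, hfs⟩ := hf
  obtain ⟨f', T, v, hT, hv, h0', hss, rfl⟩ := exists_eq_add_const_on_support h0 hf0
  have hTK : T ∈ K := K.mem_of_subset hsK (Finset.coe_subset.1 (hT ▸ hfs))
    (Finset.coe_nonempty.1 (hT ▸ support_nonempty_iff.2 hf0))
  have hinv : K.baryInv (fun w => f' w + if w ∈ T then v else 0) =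
      K.baryInv f' + Pi.single ⟨T, hTK⟩ (#T * v) := funext fun s => by
    simp [baryInv_add_ite h0' (hT ▸ hss.subset) hv.le, Pi.single_apply, Subtype.ext_iff]
  have hpos : (0 : ℝ) < #T := by exact_mod_cast card_pos.2 (K.nonempty_of_mem hTK)
  rw [hinv, map_add, ih f' hss h0' ⟨T, hTK, hT ▸ hss.subset⟩, baryMap_single]
  funext w
  simp [mul_div_cancel_left₀ _ hpos.ne']

theorem isChain_support_baryInv (f : W → ℝ) : IsChain (· ≤ ·) (support (K.baryInv f)) := by
  have gap_pos : ∀ s : K, K.baryInv f s ≠ 0 →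
      (s : Finset W).offMax f < (s : Finset W).inf' (K.nonempty_of_mem s.2) f := fun s hs =>
    sub_pos.1 (lt_of_not_ge fun h => hs (by simp [baryInv, h]))
  rintro s hs s' hs' -
  by_contra h
  simp only [not_or, ← Subtype.coe_le_coe, not_subset] at h
  obtain ⟨⟨w, hws, hws'⟩, ⟨w', hw's', hw's⟩⟩ := h
  have := gap_pos s hs
  have := gap_pos s' hs'
  linarith [inf'_le f hws, le_offMax f hws', inf'_le f hw's', le_offMax f hw's]

theorem continuous_baryInv_apply (s : K) :
    Continuous fun f : K.Realization => K.baryInv f.1 s :=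
  continuous_const.mul <| continuous_const.max <|
    (Continuous.finset_inf'_apply _ fun w _ => (continuous_apply w).comp continuous_subtype_val
      ).sub (Finset.continuous_offMax _ fun w => (continuous_apply w).comp continuous_subtype_val)

theorem baryMap_mem_realization (x : OrderComplex K) :
    (∀ w, 0 ≤ K.baryMap x.1 w) ∧ HasSum (K.baryMap x.1) 1 ∧
      ∃ s ∈ K, support (K.baryMap x.1) ⊆ s := by
  obtain ⟨t, ht, htop⟩ := x.isChain_support.exists_isGreatest (Set.toFinite _) x.support_nonempty
  refine ⟨baryMap_nonneg K x.2.1, ?_, t, t.2, (support_baryMap_subset K x.1).trans <|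
    Set.iUnion₂_subset fun s hs => Finset.coe_subset.2 (htop hs)⟩
  simpa [sum_baryMap, x.sum_eq_one] using hasSum_fintype (K.baryMap x.1)

theorem sum_baryInv (f : K.Realization) : ∑ s, K.baryInv f.1 s = 1 := by
  rw [← sum_baryMap, baryMap_baryInv f.2.1 f.2.2.2]
  exact (hasSum_fintype f.1).unique f.2.2.1

variable (K) in
noncomputable def baryHomeomorph : OrderComplex K ≃ₜ K.Realization where
  toFun x := ⟨K.baryMap x.1, baryMap_mem_realization x⟩
  invFun f := OrderComplex.mk (K.baryInv f.1) (baryInv_nonneg _) (sum_baryInv f)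
    (isChain_support_baryInv _)
  left_inv x := Subtype.ext (baryInv_baryMap x.2.1 x.isChain_support)
  right_inv f := Subtype.ext (baryMap_baryInv f.2.1 f.2.2.2)
  continuous_toFun :=
    (K.baryMap.continuous_of_finiteDimensional.comp continuous_subtype_val).subtype_mk _
  continuous_invFun := (continuous_pi continuous_baryInv_apply).subtype_mk _

end PreAbstractSimplicialComplex

namespace IntervalSubdivision

/-- Twice the length of `[l - ya, l] ∩ [r - yb, r] ∩ [0, S / 2]`. -/
noncomputable def overlap (l r ya yb S : ℝ) : ℝ :=
  2 * max 0 (min (min l r) (S / 2) - max (max (l - ya) (r - yb)) 0)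

section Overlap

variable {l r ya yb S s : ℝ}

theorem overlap_nonneg : 0 ≤ overlap l r ya yb S :=
  mul_nonneg zero_le_two (le_max_left _ _)

theorem overlap_comm : overlap l r ya yb S = overlap r l yb ya S := by
  simp only [overlap, min_comm l r, max_comm (l - ya)]

theorem overlap_eq_zero_of_left (h : ya ≤ 0) : overlap l r ya yb S = 0 := by
  have : min (min l r) (S / 2) ≤ max (max (l - ya) (r - yb)) 0 :=
    (min_le_left _ _).trans <| (min_le_left _ _).trans <|
      (by linarith : l ≤ l - ya).trans <| le_max_of_le_left (le_max_left _ _)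
  simp [overlap, this]

theorem overlap_eq_zero_of_right (h : yb ≤ 0) : overlap l r ya yb S = 0 := by
  rw [overlap_comm, overlap_eq_zero_of_left h]

private theorem min_shift : min (min (l + s / 2) (r + s / 2)) ((S + s) / 2) =
    min (min l r) (S / 2) + s / 2 := by
  rw [min_add_add_right, add_div, min_add_add_right]

/-- All upper ends move right by `s / 2`, and so do the lower ends `l - ya`, `r - yb` unless `A`
resp. `B` pins them at `0`: the overlap grows, by `s`, exactly when both are pinned. -/
theorem overlap_add_half {A B : Prop} [Decidable A] [Decidable B] (hl : ya ≤ l) (hr : yb ≤ r)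
    (hya : 0 ≤ ya) (hyb : 0 ≤ yb) (hS : 0 ≤ S) (hs : 0 ≤ s) (hA : A → ya = l) (hB : B → yb = r) :
    overlap (l + s / 2) (r + s / 2) (ya + if A then s / 2 else 0) (yb + if B then s / 2 else 0)
      (S + s) = overlap l r ya yb S + if A ∧ B then s else 0 := by
  simp only [overlap, min_shift]
  by_cases hA' : A <;> by_cases hB' : B <;>
    simp only [hA', hB', if_true, if_false, and_true, and_false, add_zero]
  · obtain rfl := hA hA'
    obtain rfl := hB hB'
    have : 0 ≤ min (min ya yb) (S / 2) := le_min (le_min hya hyb) (by linarith)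
    simp only [sub_self, max_self, sub_zero, max_eq_right this,
      max_eq_right (by linarith : 0 ≤ min (min ya yb) (S / 2) + s / 2)]
    ring
  · obtain rfl := hA hA'
    rw [show ya + s / 2 - (ya + s / 2) = 0 by ring, sub_self,
      max_eq_right (by linarith : (0 : ℝ) ≤ r + s / 2 - yb), max_eq_right (sub_nonneg.2 hr),
      max_eq_left (by linarith : (0 : ℝ) ≤ r + s / 2 - yb), max_eq_left (sub_nonneg.2 hr)]
    ring_nf
  · obtain rfl := hB hB'
    rw [show yb + s / 2 - (yb + s / 2) = 0 by ring, sub_self,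
      max_eq_left (by linarith : (0 : ℝ) ≤ l + s / 2 - ya), max_eq_left (sub_nonneg.2 hl),
      max_eq_left (by linarith : (0 : ℝ) ≤ l + s / 2 - ya), max_eq_left (sub_nonneg.2 hl)]
    ring_nf
  · rw [show l + s / 2 - ya = l - ya + s / 2 by ring, show r + s / 2 - yb = r - yb + s / 2 by ring,
      max_add_add_right, max_eq_left (le_max_of_le_left (sub_nonneg.2 hl)),
      max_eq_left (add_nonneg (le_max_of_le_left (sub_nonneg.2 hl)) (by linarith : 0 ≤ s / 2))]
    ring_nf

/-- The interval `[a, a]` at the least point `a`, of mass `u`, of a support of total mass `M`. -/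
theorem overlap_add_of_lowest {u M : ℝ} (huM : u ≤ M) (hs : 0 ≤ s) :
    overlap (u + s / 2) (M + s) (u + s / 2) (u + s / 2) (M + s) = overlap u M u u M := by
  simp only [overlap, sub_self, show M + s - (u + s / 2) = M - u + s / 2 by ring,
    min_eq_left (by linarith : u + s / 2 ≤ M + s), min_eq_left huM, add_div,
    min_add_add_right, max_eq_right (by linarith : (0 : ℝ) ≤ M - u + s / 2),
    max_eq_left (by linarith : (0 : ℝ) ≤ M - u + s / 2), max_eq_right (sub_nonneg.2 huM),
    max_eq_left (sub_nonneg.2 huM)]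
  ring_nf

theorem overlap_self_add (hS : 0 ≤ S) (hs : 0 ≤ s) :
    overlap (S + s) (S + s) (S + s) (S + s) (S + s) = overlap S S S S S + s := by
  have key : ∀ v : ℝ, 0 ≤ v → overlap v v v v v = v := fun v hv => by
    simp only [overlap, sub_self, max_self, min_self, sub_zero,
      min_eq_right (by linarith : v / 2 ≤ v), max_eq_right (by linarith : (0 : ℝ) ≤ v / 2)]
    ring
  rw [key _ (add_nonneg hS hs), key _ hS]

theorem lt_of_overlap_ne_zero {l r ya yb S : ℝ} (h : overlap l r ya yb S ≠ 0) :
    r - yb < l ∧ l - ya < r := by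
  have : max (max (l - ya) (r - yb)) 0 < min (min l r) (S / 2) :=
    sub_pos.1 (lt_of_not_ge fun h' => h (by simp [overlap, h']))
  constructor <;>
  linarith [le_max_left (max (l - ya) (r - yb)) 0, le_max_left (l - ya) (r - yb),
    le_max_right (l - ya) (r - yb), min_le_left (min l r) (S / 2), min_le_left l r,
    min_le_right l r]

end Overlap

end IntervalSubdivision

instance {α : Type*} [LE α] [Finite α] : Finite (NonemptyInterval α) :=
  Finite.of_injective _ NonemptyInterval.toProd_injective

noncomputable instance {α : Type*} [LE α] [Finite α] : Fintype (NonemptyInterval α) :=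
  Fintype.ofFinite _

namespace IntervalSubdivision

variable {R : Type*} [PartialOrder R] [Fintype R]

noncomputable def weightBelow (y : R → ℝ) (a : R) : ℝ := ∑ c with c ≤ a, y c

noncomputable def weightAbove (y : R → ℝ) (b : R) : ℝ := ∑ c with b ≤ c, y c

/-- Sends an interval to its midpoint. -/
noncomputable def midpointMap : (NonemptyInterval R → ℝ) →ₗ[ℝ] R → ℝ :=
  Fintype.linearCombination ℝ fun p => Pi.single p.fst (1 / 2) + Pi.single p.snd (1 / 2)

theorem midpointMap_apply (x : NonemptyInterval R → ℝ) (c : R) :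
    midpointMap x c =
      ∑ p, x p * ((if c = p.fst then 1 / 2 else 0) + if c = p.snd then 1 / 2 else 0) := by
  simp [midpointMap, Fintype.linearCombination_apply, Finset.sum_apply, Pi.single_apply, mul_add]

theorem midpointMap_single (q : NonemptyInterval R) (s : ℝ) (c : R) :
    midpointMap (Pi.single q s) c =
      (if c = q.fst then s / 2 else 0) + if c = q.snd then s / 2 else 0 := by
  simp [midpointMap, Pi.single_apply]
  split_ifs <;> ring

theorem midpointMap_nonneg {x : NonemptyInterval R → ℝ} (h0 : ∀ p, 0 ≤ x p) (c : R) :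
    0 ≤ midpointMap x c := by
  rw [midpointMap_apply]
  exact sum_nonneg fun p _ => mul_nonneg (h0 p) (by positivity)

theorem sum_midpointMap (x : NonemptyInterval R → ℝ) : ∑ c, midpointMap x c = ∑ p, x p := by
  simp_rw [midpointMap_apply, sum_comm (γ := R), ← mul_sum, sum_add_distrib, sum_ite_eq',
    mem_univ, if_true]
  norm_num

theorem support_midpointMap_subset (x : NonemptyInterval R → ℝ) :
    support (midpointMap x) ⊆ ⋃ p ∈ support x, {p.fst, p.snd} := fun c hc => by
  rw [mem_support, midpointMap_apply] at hc
  obtain ⟨p, -, hp⟩ := exists_ne_zero_of_sum_ne_zero hc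
  simp only [Set.mem_iUnion, Set.mem_insert_iff, Set.mem_singleton_iff]
  refine ⟨p, left_ne_zero_of_mul hp, by_contra fun h => hp ?_⟩
  simp [not_or.1 h]

variable {y : R → ℝ}

theorem le_weightBelow (h0 : ∀ c, 0 ≤ y c) (a : R) : y a ≤ weightBelow y a :=
  single_le_sum (fun c _ => h0 c) (by simp)

theorem le_weightAbove (h0 : ∀ c, 0 ≤ y c) (b : R) : y b ≤ weightAbove y b :=
  single_le_sum (fun c _ => h0 c) (by simp)

theorem weightBelow_le_sub (h0 : ∀ c, 0 ≤ y c) {a a' : R} (h : a < a') :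
    weightBelow y a ≤ weightBelow y a' - y a' := by
  rw [weightBelow, weightBelow, ← sum_erase_eq_sub (by simp)]
  exact sum_le_sum_of_subset_of_nonneg (fun c hc => by
    simp only [mem_filter, mem_univ, true_and, mem_erase] at hc ⊢
    exact ⟨fun h' => h.not_ge (h' ▸ hc), hc.trans h.le⟩) fun c _ _ => h0 c

theorem weightAbove_le_sub (h0 : ∀ c, 0 ≤ y c) {b b' : R} (h : b < b') :
    weightAbove y b' ≤ weightAbove y b - y b :=
  weightBelow_le_sub (R := Rᵒᵈ) h0 h

variable {q : NonemptyInterval R}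

theorem weightBelow_fst (hq : ∀ c, y c ≠ 0 → c ∈ q) : weightBelow y q.fst = y q.fst :=
  sum_eq_single_of_mem _ (by simp) fun c hc hne => by_contra fun h =>
    hne (le_antisymm (by simpa using hc) (hq c h).1)

theorem weightAbove_snd (hq : ∀ c, y c ≠ 0 → c ∈ q) : weightAbove y q.snd = y q.snd :=
  weightBelow_fst (R := Rᵒᵈ) (q := ⟨(q.snd, q.fst), q.fst_le_snd⟩) fun c hc => (hq c hc).symm

theorem weightBelow_snd (hq : ∀ c, y c ≠ 0 → c ∈ q) : weightBelow y q.snd = ∑ c, y c :=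
  sum_subset (filter_subset _ _) fun c _ hc => by_contra fun h => hc (by simpa using (hq c h).2)

theorem weightAbove_fst (hq : ∀ c, y c ≠ 0 → c ∈ q) : weightAbove y q.fst = ∑ c, y c :=
  weightBelow_snd (R := Rᵒᵈ) (q := ⟨(q.snd, q.fst), q.fst_le_snd⟩) fun c hc => (hq c hc).symm

/-- Lay the mass of `y` out on `[0, ∑ y]` along a chain: `[weightBelow y a - y a, weightBelow y a]`
is the part of `a` counted from the left, `[weightAbove y b - y b, weightAbove y b]` that of `b`
counted from the right. Folding in half, `[a, b]` gets twice the length on which `a` meets `b`. -/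
noncomputable def foldMap (y : R → ℝ) (p : NonemptyInterval R) : ℝ :=
  overlap (weightBelow y p.fst) (weightAbove y p.snd) (y p.fst) (y p.snd) (∑ c, y c)

theorem weightBelow_add_midpointMap_single (q : NonemptyInterval R) (s : ℝ) (c : R) :
    weightBelow (y + midpointMap (Pi.single q s)) c =
      weightBelow y c + (if q.fst ≤ c then s / 2 else 0) + if q.snd ≤ c then s / 2 else 0 := by
  simp [weightBelow, sum_add_distrib, midpointMap_single, sum_ite_eq', add_assoc]

theorem weightAbove_add_midpointMap_single (q : NonemptyInterval R) (s : ℝ) (c : R) :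
    weightAbove (y + midpointMap (Pi.single q s)) c =
      weightAbove y c + (if c ≤ q.fst then s / 2 else 0) + if c ≤ q.snd then s / 2 else 0 := by
  simp [weightAbove, sum_add_distrib, midpointMap_single, sum_ite_eq', add_assoc]

theorem foldMap_eq_zero {p : NonemptyInterval R} (h : y p.fst = 0 ∨ y p.snd = 0) :
    foldMap y p = 0 :=
  h.elim (fun h => overlap_eq_zero_of_left h.le) fun h => overlap_eq_zero_of_right h.le

theorem foldMap_nonneg (y : R → ℝ) (p : NonemptyInterval R) : 0 ≤ foldMap y p := overlap_nonneg

theorem add_midpointMap_single_apply (y : R → ℝ) (q : NonemptyInterval R) (s : ℝ) (c : R) :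
    (y + midpointMap (Pi.single q s)) c =
      y c + (if c = q.fst then s / 2 else 0) + if c = q.snd then s / 2 else 0 := by
  simp [midpointMap_single, add_assoc]

theorem sum_add_midpointMap_single (y : R → ℝ) (q : NonemptyInterval R) (s : ℝ) :
    ∑ c, (y + midpointMap (Pi.single q s)) c = ∑ c, y c + s := by
  simp [sum_add_distrib, sum_midpointMap]

/-- Adding mass `s / 2` at both ends of the support shifts every segment of the fold by `s / 2`
and creates an initial piece of length `s / 2` on which `q.fst` meets `q.snd`. -/
theorem foldMap_add_midpointMap_single_of_mem (h0 : ∀ c, 0 ≤ y c) {q : NonemptyInterval R}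
    (hq : ∀ c, y c ≠ 0 → c ∈ q) {s : ℝ} (hs : 0 < s) {p : NonemptyInterval R} (hp₁ : p.fst ∈ q)
    (hp₂ : p.snd ∈ q) :
    foldMap (y + midpointMap (Pi.single q s)) p =
      foldMap y p + (Pi.single q s : NonemptyInterval R → ℝ) p := by
  obtain ⟨⟨hl₁, hl₂⟩, ⟨hr₁, hr₂⟩⟩ := And.intro hp₁ hp₂
  have hyS : ∀ c, y c ≤ ∑ c, y c := fun c => single_le_sum (fun c _ => h0 c) (mem_univ c)
  rw [foldMap, foldMap, sum_add_midpointMap_single]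
  simp only [add_midpointMap_single_apply, weightBelow_add_midpointMap_single,
    weightAbove_add_midpointMap_single]
  rcases q.fst_le_snd.eq_or_lt with hab | hab
  · obtain rfl : p = q := NonemptyInterval.ext (Prod.ext
      (le_antisymm (hl₂.trans_eq hab.symm) hl₁) (le_antisymm hr₂ (hab ▸ hr₁)))
    have hL := weightBelow_fst hq
    have hyS := weightBelow_snd hq
    have hR := weightAbove_fst hq
    rw [← hab, hL] at hyS
    simp only [← hab, le_refl, if_true, Pi.single_eq_same, add_assoc, add_halves, hL, hR, hyS]
    exact overlap_self_add (sum_nonneg fun c _ => h0 c) hs.le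
  by_cases hb : p.fst = q.snd
  · have hb' : p.snd = q.snd := le_antisymm hr₂ (hb ▸ p.fst_le_snd)
    have hpq : p ≠ q := fun h => hab.ne (h ▸ hb)
    simp only [hb, hb', Pi.single_eq_of_ne hpq, hab.le, le_refl, hab.not_ge, hab.ne', if_true,
      if_false, add_zero, add_assoc, add_halves, weightBelow_snd hq, weightAbove_snd hq]
    rw [overlap_comm, overlap_add_of_lowest (hyS _) hs.le, overlap_comm]
  by_cases ha : p.snd = q.fst
  · have ha' : p.fst = q.fst := le_antisymm (ha ▸ p.fst_le_snd) hl₁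
    have hpq : p ≠ q := fun h => hab.ne' (h ▸ ha)
    simp only [ha, ha', Pi.single_eq_of_ne hpq, hab.le, le_refl, hab.not_ge, hab.ne, if_true,
      if_false, add_zero, add_assoc, add_halves, weightBelow_fst hq, weightAbove_fst hq]
    exact overlap_add_of_lowest (hyS _) hs.le
  have h₁ : ¬q.snd ≤ p.fst := fun h => hb (le_antisymm hl₂ h)
  have h₂ : ¬p.snd ≤ q.fst := fun h => ha (le_antisymm h hr₁)
  simp only [hl₁, hr₂, h₁, h₂, hb, ha, if_true, if_false, add_zero, Pi.single_apply,
    NonemptyInterval.ext_iff, Prod.ext_iff]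
  exact overlap_add_half (le_weightBelow h0 _) (le_weightAbove h0 _) (h0 _) (h0 _)
    (sum_nonneg fun c _ => h0 c) hs.le (fun h => h ▸ (weightBelow_fst hq).symm)
    (fun h => h ▸ (weightAbove_snd hq).symm)

theorem foldMap_add_midpointMap_single (h0 : ∀ c, 0 ≤ y c) {q : NonemptyInterval R}
    (hq : ∀ c, y c ≠ 0 → c ∈ q) {s : ℝ} (hs : 0 < s) (p : NonemptyInterval R) :
    foldMap (y + midpointMap (Pi.single q s)) p =
      foldMap y p + (Pi.single q s : NonemptyInterval R → ℝ) p := by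
  by_cases hp : y p.fst = 0 ∧ p.fst ≠ q.fst ∧ p.fst ≠ q.snd ∨
      y p.snd = 0 ∧ p.snd ≠ q.fst ∧ p.snd ≠ q.snd
  · have hpq : p ≠ q := by rintro rfl; simp at hp
    rw [foldMap_eq_zero (hp.imp (·.1) (·.1)), Pi.single_eq_of_ne hpq, add_zero,
      foldMap_eq_zero (hp.imp (fun h => by simp [midpointMap_single, h.1, h.2.1, h.2.2])
        (fun h => by simp [midpointMap_single, h.1, h.2.1, h.2.2]))]
  simp only [not_or, not_and_or, not_not] at hp
  have hmem : ∀ c, (y c ≠ 0 ∨ c = q.fst ∨ c = q.snd) → c ∈ q := by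
    rintro c (h | rfl | rfl)
    exacts [hq c h, ⟨le_rfl, q.fst_le_snd⟩, ⟨q.fst_le_snd, le_rfl⟩]
  exact foldMap_add_midpointMap_single_of_mem h0 hq hs (hmem _ (by tauto)) (hmem _ (by tauto))

theorem foldMap_midpointMap {x : NonemptyInterval R → ℝ} (h0 : ∀ p, 0 ≤ x p)
    (hx : IsChain (· ≤ ·) (support x)) : foldMap (midpointMap x) = x := by
  induction x using induction_of_ssubset (m := fun x : NonemptyInterval R → ℝ => support x) with
  | ind x ih => ?_
  by_cases hx0 : x = 0
  · ext p
    simp [hx0, foldMap_eq_zero]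
  obtain ⟨q, hq, htop⟩ := hx.exists_isGreatest (Set.toFinite _) (support_nonempty_iff.2 hx0)
  set x' := update x q 0
  have hss : support x' ⊂ support x := by
    rw [support_update_zero]
    exact Set.sdiff_singleton_ssubset.2 hq
  have hx' : x = x' + Pi.single q (x q) := by
    ext p; by_cases hp : p = q <;> simp [x', hp]
  have h0' : ∀ p, 0 ≤ x' p := fun p => by by_cases hp : p = q <;> simp [x', hp, h0 p]
  have hsupp : ∀ c, midpointMap x' c ≠ 0 → c ∈ q := fun c hc => by
    obtain ⟨p, hp, hcp⟩ := Set.mem_iUnion₂.1 (support_midpointMap_subset x' hc)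
    obtain ⟨h₁, h₂⟩ := NonemptyInterval.le_def.1 (htop (hss.subset hp))
    rcases hcp with rfl | rfl
    exacts [⟨h₁, p.fst_le_snd.trans h₂⟩, ⟨h₁.trans p.fst_le_snd, h₂⟩]
  funext p
  rw [hx', map_add, foldMap_add_midpointMap_single (midpointMap_nonneg h0') hsupp
    ((h0 q).lt_of_ne' hq), ih x' hss h0' (hx.mono hss.subset)]
  rfl

/-- Peel off the midpoint of the interval spanned by the support of `y`, as far as possible. -/
theorem exists_eq_add_midpointMap_single {y : R → ℝ} (h0 : ∀ c, 0 ≤ y c)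
    (hy : IsChain (· ≤ ·) (support y)) (hy0 : y ≠ 0) :
    ∃ (y' : R → ℝ) (q : NonemptyInterval R) (s : ℝ), 0 < s ∧ (∀ c, 0 ≤ y' c) ∧
      support y' ⊂ support y ∧ (∀ c, y' c ≠ 0 → c ∈ q) ∧ y = y' + midpointMap (Pi.single q s) := by
  have hne := support_nonempty_iff.2 hy0
  obtain ⟨a, ha, hbot⟩ := hy.exists_isLeast (Set.toFinite _) hne
  obtain ⟨b, hb, htop⟩ := hy.exists_isGreatest (Set.toFinite _) hne
  have hya := (h0 a).lt_of_ne' ha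
  have hyb := (h0 b).lt_of_ne' hb
  let s := if a = b then y a else 2 * min (y a) (y b)
  have hs : 0 < s := by unfold s; split_ifs <;> simp [hya, hyb]
  let q : NonemptyInterval R := ⟨(a, b), htop ha⟩
  have hy' : ∀ c, (y - midpointMap (Pi.single q s)) c =
      y c - ((if c = a then s / 2 else 0) + if c = b then s / 2 else 0) := fun c => by
    simp [midpointMap_single, q]
  have hle : ∀ c, ((if c = a then s / 2 else 0) + if c = b then s / 2 else 0) ≤ y c := by
    intro c
    by_cases hca : c = a <;> by_cases hcb : c = b
    · subst hca hcb; simp [s]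
    · subst hca; simp [s, hcb]
    · subst hcb; simp [s, Ne.symm hca, hca]
    · simp [hca, hcb, h0 c]
  have hkill : ∃ c ∈ support y, (y - midpointMap (Pi.single q s)) c = 0 := by
    by_cases hab : a = b
    · subst hab; exact ⟨a, ha, by rw [hy']; simp [s]⟩
    · rcases min_choice (y a) (y b) with hm | hm
      · exact ⟨a, ha, by rw [hy']; simp [s, hab, hm]⟩
      · exact ⟨b, hb, by rw [hy']; simp [s, hab, Ne.symm hab, hm]⟩
  have hsupp : ∀ c, (y - midpointMap (Pi.single q s)) c ≠ 0 → y c ≠ 0 := fun c hc h => hc <| by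
    have hca : c ≠ a := fun h' => ha (h' ▸ h)
    have hcb : c ≠ b := fun h' => hb (h' ▸ h)
    simp [hy', h, hca, hcb]
  obtain ⟨c₀, hc₀, hc₀'⟩ := hkill
  refine ⟨y - midpointMap (Pi.single q s), q, s, hs, fun c => (hy' c).symm ▸ sub_nonneg.2 (hle c),
    ⟨hsupp, fun h => h hc₀ hc₀'⟩, fun c hc => ⟨hbot (hsupp c hc), htop (hsupp c hc)⟩, by simp⟩

theorem midpointMap_foldMap {y : R → ℝ} (h0 : ∀ c, 0 ≤ y c) (hy : IsChain (· ≤ ·) (support y)) :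
    midpointMap (foldMap y) = y := by
  induction y using induction_of_ssubset (m := fun y : R → ℝ => support y) with | ind y ih => ?_
  by_cases hy0 : y = 0
  · have : foldMap y = 0 := funext fun p => foldMap_eq_zero (by simp [hy0])
    rw [this, map_zero, hy0]
  obtain ⟨y', q, s, hs, h0', hss, hq, rfl⟩ := exists_eq_add_midpointMap_single h0 hy hy0
  have : foldMap (y' + midpointMap (Pi.single q s)) = foldMap y' + Pi.single q s :=
    funext (foldMap_add_midpointMap_single h0' hq hs)
  rw [this, map_add, ih y' hss h0' (hy.mono hss.subset)]

theorem not_foldMap_ne_zero_of_lt {y : R → ℝ} (h0 : ∀ c, 0 ≤ y c) {p p' : NonemptyInterval R}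
    (hp : foldMap y p ≠ 0) (hp' : foldMap y p' ≠ 0) (h₁ : p.fst < p'.fst) (h₂ : p.snd < p'.snd) :
    False := by
  linarith [(lt_of_overlap_ne_zero hp).1, (lt_of_overlap_ne_zero hp').2,
    weightBelow_le_sub h0 h₁, weightAbove_le_sub h0 h₂]

theorem isChain_support_foldMap {y : R → ℝ} (h0 : ∀ c, 0 ≤ y c)
    (hy : IsChain (· ≤ ·) (support y)) : IsChain (· ≤ ·) (support (foldMap y)) := by
  have hend : ∀ {p}, foldMap y p ≠ 0 → y p.fst ≠ 0 ∧ y p.snd ≠ 0 := fun hp =>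
    ⟨fun h => hp (foldMap_eq_zero (.inl h)), fun h => hp (foldMap_eq_zero (.inr h))⟩
  have key : ∀ {p p'}, foldMap y p ≠ 0 → foldMap y p' ≠ 0 → p.fst ≤ p'.fst → p.snd ≤ p'.snd →
      p ≤ p' ∨ p' ≤ p := fun {p p'} hp hp' h₁ h₂ => by
    simp only [NonemptyInterval.le_def]
    rcases h₁.eq_or_lt with h₁ | h₁
    · exact .inl ⟨h₁.ge, h₂⟩
    rcases h₂.eq_or_lt with h₂ | h₂
    · exact .inr ⟨h₁.le, h₂.ge⟩
    exact (not_foldMap_ne_zero_of_lt h0 hp hp' h₁ h₂).elim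
  rintro p hp p' hp' -
  rcases hy.total (hend hp).1 (hend hp').1 with h₁ | h₁ <;>
    rcases hy.total (hend hp).2 (hend hp').2 with h₂ | h₂
  · exact key hp hp' h₁ h₂
  · exact .inr (NonemptyInterval.le_def.2 ⟨h₁, h₂⟩)
  · exact .inl (NonemptyInterval.le_def.2 ⟨h₁, h₂⟩)
  · exact (key hp' hp h₁ h₂).symm

theorem isChain_support_midpointMap {x : NonemptyInterval R → ℝ}
    (hx : IsChain (· ≤ ·) (support x)) : IsChain (· ≤ ·) (support (midpointMap x)) := by
  have key : ∀ {p p' : NonemptyInterval R}, p ≤ p' → ∀ c ∈ ({p.fst, p.snd} : Set R),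
      ∀ c' ∈ ({p'.fst, p'.snd} : Set R), c ≤ c' ∨ c' ≤ c := fun {p p'} h => by
    obtain ⟨h₁, h₂⟩ := NonemptyInterval.le_def.1 h
    rintro c (rfl | rfl) c' (rfl | rfl)
    exacts [.inr h₁, .inl (p.fst_le_snd.trans h₂), .inr (h₁.trans p.fst_le_snd), .inl h₂]
  refine IsChain.mono (support_midpointMap_subset x) ?_
  rintro c hc c' hc' -
  obtain ⟨p, hp, hcp⟩ := Set.mem_iUnion₂.1 hc
  obtain ⟨p', hp', hcp'⟩ := Set.mem_iUnion₂.1 hc'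
  rcases hx.total hp hp' with h | h
  exacts [key h c hcp c' hcp', (key h c' hcp' c hcp).symm]

theorem continuous_foldMap_apply (p : NonemptyInterval R) :
    Continuous fun y : OrderComplex R => foldMap y.1 p := by
  have hc := OrderComplex.continuous_apply' (P := R)
  have hsum : ∀ s : Finset R, Continuous fun y : OrderComplex R => ∑ c ∈ s, y.1 c :=
    fun s => continuous_finsetSum _ fun c _ => hc c
  exact continuous_const.mul <| continuous_const.max <|
    (((hsum _).min (hsum _)).min ((hsum _).div_const 2)).sub
      ((((hsum _).sub (hc _)).max ((hsum _).sub (hc _))).max continuous_const)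

variable (R) in
noncomputable def homeomorph : OrderComplex (NonemptyInterval R) ≃ₜ OrderComplex R where
  toFun x := OrderComplex.mk (midpointMap x.1) (midpointMap_nonneg x.2.1)
    (by rw [sum_midpointMap, x.sum_eq_one]) (isChain_support_midpointMap x.isChain_support)
  invFun y := OrderComplex.mk (foldMap y.1) (foldMap_nonneg _)
    (by rw [← sum_midpointMap, midpointMap_foldMap y.2.1 y.isChain_support, y.sum_eq_one])
    (isChain_support_foldMap y.2.1 y.isChain_support)
  left_inv x := Subtype.ext (foldMap_midpointMap x.2.1 x.isChain_support)
  right_inv y := Subtype.ext (midpointMap_foldMap y.2.1 y.isChain_support)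
  continuous_toFun :=
    (midpointMap.continuous_of_finiteDimensional.comp continuous_subtype_val).subtype_mk _
  continuous_invFun := (continuous_pi continuous_foldMap_apply).subtype_mk _

end IntervalSubdivision

namespace SimpleGraph

variable {V : Type*} (G : SimpleGraph V)

theorem lowerPolar_adj : lowerPolar G.Adj = upperPolar G.Adj := by
  ext S v
  exact forall₂_congr fun w _ => G.adj_comm v w

theorem extentClosure_adj (S : Set V) :
    extentClosure G.Adj S = upperPolar G.Adj (upperPolar G.Adj S) := by
  rw [extentClosure_apply, lowerPolar_adj]

theorem upperPolar_extentClosure (S : Set V) :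
    upperPolar G.Adj (extentClosure G.Adj S) = upperPolar G.Adj S := by
  rw [extentClosure_apply, upperPolar_lowerPolar_upperPolar]

theorem extentClosure_upperPolar (S : Set V) :
    extentClosure G.Adj (upperPolar G.Adj S) = upperPolar G.Adj S := by
  rw [extentClosure_apply, ← congrFun G.lowerPolar_adj S, lowerPolar_upperPolar_lowerPolar]

theorem adj_of_mem_extentClosure {A B : Set V} (h : ∀ a ∈ A, ∀ b ∈ B, G.Adj a b) {a b : V}
    (ha : a ∈ extentClosure G.Adj A) (hb : b ∈ extentClosure G.Adj B) : G.Adj a b := by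
  rw [extentClosure_adj] at ha hb
  exact hb fun b' hb' => ha fun a' ha' => h a' ha' b' hb'

/-- The neighbourhood complex: the faces are the nonempty sets with a common neighbour. -/
def nbhdComplex : PreAbstractSimplicialComplex V where
  faces := {s | s.Nonempty ∧ (upperPolar G.Adj (s : Set V)).Nonempty}
  isRelLowerSet_faces := fun _ hs => ⟨hs.1, fun _ hts ht =>
    ⟨ht, hs.2.mono (upperPolar_anti G.Adj (Finset.coe_subset.2 hts))⟩⟩

theorem mem_nbhdComplex {s : Finset V} :
    s ∈ G.nbhdComplex ↔ s.Nonempty ∧ (upperPolar G.Adj (s : Set V)).Nonempty := Iff.rfl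

abbrev NbhdFace : Type _ := {S : Set V // S.Nonempty ∧ (upperPolar G.Adj S).Nonempty}

section Finite

variable [Fintype V]

noncomputable def nbhdComplexHomeomorph : NbhdComplex G ≃ₜ G.nbhdComplex.Realization :=
  Homeomorph.subtype (.refl _) fun f => and_congr_right fun _ => and_congr_right fun h1 => by
    refine ⟨fun ⟨v, hv⟩ => ⟨univ.filter (f · ≠ 0), ⟨?_, v, fun w hw => (hv w ?_).symm⟩,
      fun w hw => by simpa using hw⟩, fun ⟨s, hs, hfs⟩ => ?_⟩
    · obtain ⟨w, hw⟩ : ∃ w, f w ≠ 0 := not_forall.1 fun h => one_ne_zero <|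
        h1.unique (by simp [funext h])
      exact ⟨w, by simpa using hw⟩
    · simpa using hw
    · obtain ⟨v, hv⟩ := hs.2
      exact ⟨v, fun w hw => (hv (hfs hw)).symm⟩

noncomputable def nbhdFaceOrderIso : G.nbhdComplex ≃o G.NbhdFace where
  toFun s := ⟨s.1, by simpa using G.mem_nbhdComplex.1 s.2⟩
  invFun S := ⟨S.1.toFinset, G.mem_nbhdComplex.2 (by simpa using S.2)⟩
  left_inv s := by simp
  right_inv S := by simp
  map_rel_iff' := Finset.coe_subset

end Finite

/-- Closing up a face `S` to `N(N(S))`, where `N` takes common neighbourhoods. -/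
noncomputable def faceClosure : ClosureOperator G.NbhdFace :=
  .mk' (fun S => ⟨extentClosure G.Adj S.1, S.2.1.mono ((extentClosure G.Adj).le_closure _),
      by simpa [upperPolar_extentClosure] using S.2.2⟩)
    (fun _ _ h => (extentClosure G.Adj).monotone h) (fun _ => (extentClosure G.Adj).le_closure _)
    (fun _ => ((extentClosure G.Adj).idempotent _).le)

theorem extentClosure_closed (S : G.faceClosure.Closeds) : extentClosure G.Adj S.1.1 = S.1.1 :=
  congrArg Subtype.val S.2

abbrev Cell : Type _ := HomCell (⊤ : SimpleGraph (Fin 2)).Adj G.Adj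

theorem Cell.adj_of_mem {c : G.Cell} {a b : V} (ha : a ∈ c.η 0) (hb : b ∈ c.η 1) : G.Adj a b :=
  HomCell.adj c (by simp) a ha b hb

noncomputable def cellClosure : ClosureOperator G.Cell :=
  .mk' (fun c => ⟨fun i => extentClosure G.Adj (c.η i),
      fun i => (c.nonempty i).mono ((extentClosure G.Adj).le_closure _),
      fun _ _ hxy _ ha _ hb => G.adj_of_mem_extentClosure (c.adj hxy) ha hb⟩)
    (fun _ _ h i => (extentClosure G.Adj).monotone (h i))
    (fun _ _ => (extentClosure G.Adj).le_closure _)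
    (fun _ _ => ((extentClosure G.Adj).idempotent _).le)

theorem extentClosure_cell_closed (c : G.cellClosure.Closeds) (i : Fin 2) :
    extentClosure G.Adj (c.1.η i) = c.1.η i :=
  congrFun (congrArg HomCell.η c.2) i

theorem upperPolar_upperPolar_cell (c : G.cellClosure.Closeds) (i : Fin 2) :
    upperPolar G.Adj (upperPolar G.Adj (c.1.η i)) = c.1.η i := by
  rw [← extentClosure_adj, extentClosure_cell_closed]

theorem Cell.snd_subset_upperPolar (c : G.Cell) : c.η 1 ⊆ upperPolar G.Adj (c.η 0) :=
  fun _ hb _ ha => Cell.adj_of_mem G ha hb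

theorem Cell.fst_subset_upperPolar (c : G.Cell) : c.η 0 ⊆ upperPolar G.Adj (c.η 1) :=
  fun _ ha _ hb => (Cell.adj_of_mem G ha hb).symm

/-- A closed cell `(A, B)` is the interval `[A, N(B)]` of closed faces, ordered by reverse
inclusion. -/
noncomputable def cellToInterval (c : G.cellClosure.Closeds) :
    NonemptyInterval G.faceClosure.Closeds :=
  ⟨(⟨⟨c.1.η 0, c.1.nonempty 0, (c.1.nonempty 1).mono (Cell.snd_subset_upperPolar G c.1)⟩,
    Subtype.ext (G.extentClosure_cell_closed c 0)⟩,
    ⟨⟨upperPolar G.Adj (c.1.η 1), (c.1.nonempty 0).mono (Cell.fst_subset_upperPolar G c.1),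
      by rw [upperPolar_upperPolar_cell]; exact c.1.nonempty 1⟩,
    Subtype.ext (G.extentClosure_upperPolar _)⟩), Cell.fst_subset_upperPolar G c.1⟩

noncomputable def intervalToCell (I : NonemptyInterval G.faceClosure.Closeds) :
    G.cellClosure.Closeds := by
  refine ⟨⟨![I.fst.1.1, upperPolar G.Adj I.snd.1.1], fun i => ?_, fun x y hxy a ha b hb => ?_⟩,
    ?_⟩
  · fin_cases i
    exacts [I.fst.1.2.1, I.snd.1.2.2]
  · have hle : I.fst.1.1 ⊆ I.snd.1.1 := I.fst_le_snd
    fin_cases x <;> fin_cases y <;> simp at hxy ha hb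
    exacts [hb (hle ha), (ha (hle hb)).symm]
  · refine HomCell.ext (funext fun i => ?_)
    fin_cases i
    exacts [G.extentClosure_closed I.fst, G.extentClosure_upperPolar _]

noncomputable def cellOrderIso :
    G.cellClosure.Closeds ≃o (NonemptyInterval G.faceClosure.Closeds)ᵒᵈ where
  toFun c := OrderDual.toDual (G.cellToInterval c)
  invFun I := G.intervalToCell (OrderDual.ofDual I)
  left_inv c := Subtype.ext <| HomCell.ext <| funext fun i => by
    fin_cases i
    · rfl
    · exact G.upperPolar_upperPolar_cell c 1
  right_inv I := NonemptyInterval.ext <| Prod.ext rfl <| Subtype.ext <| Subtype.ext <|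
    (G.extentClosure_adj _).symm.trans (G.extentClosure_closed _)
  map_rel_iff' {c c'} := by
    change (_ ≤ _ ∧ _ ≤ _) ↔ ∀ i, c.1.η i ⊆ c'.1.η i
    rw [Fin.forall_fin_two]
    refine and_congr Iff.rfl ⟨fun h => ?_, fun h => upperPolar_anti G.Adj h⟩
    rw [← G.upperPolar_upperPolar_cell c, ← G.upperPolar_upperPolar_cell c']
    exact upperPolar_anti G.Adj h

end SimpleGraph

theorem homK2_homotopyEquiv_nbhdComplex_general {V : Type*} [Fintype V] (G : SimpleGraph V) :
    Nonempty (ContinuousMap.HomotopyEquiv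
      (HomComplex (⊤ : SimpleGraph (Fin 2)).Adj G.Adj) (NbhdComplex G)) := by
  have closedCells : OrderComplex G.cellClosure.Closeds ≃ₜ OrderComplex G.faceClosure.Closeds :=
    (OrderComplex.homeomorphOfOrderIso G.cellOrderIso).trans <|
      OrderComplex.dualHomeomorph.trans (IntervalSubdivision.homeomorph _)
  have faces : OrderComplex G.NbhdFace ≃ₜ NbhdComplex G :=
    (OrderComplex.homeomorphOfOrderIso G.nbhdFaceOrderIso).symm.trans <|
      G.nbhdComplex.baryHomeomorph.trans G.nbhdComplexHomeomorph.symm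
  exact ⟨G.cellClosure.orderComplexHomotopyEquiv.trans <| closedCells.toHomotopyEquiv.trans <|
    G.faceClosure.orderComplexHomotopyEquiv.symm.trans faces.toHomotopyEquiv⟩

/-- **Lovász/Babson–Kozlov**: for a graph `G` without isolated vertices, the complex
`Hom(K₂,G)` is homotopy equivalent to the neighborhood complex `N(G)`. -/
theorem homK2_homotopyEquiv_nbhdComplex {V : Type*} [Fintype V] (G : SimpleGraph V)
    (hiso : ∀ v : V, ∃ w, G.Adj v w) :
    Nonempty (ContinuousMap.HomotopyEquiv
      (HomComplex (⊤ : SimpleGraph (Fin 2)).Adj G.Adj) (NbhdComplex G)) :=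
  homK2_homotopyEquiv_nbhdComplex_general G
end

section
/- For any graphs G and H, the simplicial complex Hom₊(G, H) is isomorphic to the independence complex of the categorical product G × ∁H, where ∁H is the looped complement of H. -/
/-- The face poset (nonempty simplices, ordered by inclusion) of the simplicial complex
`Hom₊(G,H)` for graphs given by adjacency relations `A`, `B`: functions assigning to each
vertex a (possibly empty) set of vertices, not all empty, with adjacent vertices getting
completely adjacent sets. -/
def HomPlusFaces {V W : Type*} (A : V → V → Prop) (B : W → W → Prop) : Type _ :=
  {η : V → Set W // (∃ v, (η v).Nonempty) ∧
    ∀ ⦃x y⦄, A x y → ∀ a ∈ η x, ∀ b ∈ η y, B a b}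

instance {V W : Type*} (A : V → V → Prop) (B : W → W → Prop) :
    PartialOrder (HomPlusFaces A B) :=
  PartialOrder.lift Subtype.val Subtype.val_injective

/-- The face poset (nonempty faces, ordered by inclusion) of the independence complex of
a graph (possibly with loops) given by an adjacency relation `R`: nonempty independent
sets of vertices. -/
def IndFaces {U : Type*} (R : U → U → Prop) : Type _ :=
  {s : Set U // s.Nonempty ∧ ∀ a ∈ s, ∀ b ∈ s, ¬R a b}

instance {U : Type*} (R : U → U → Prop) : PartialOrder (IndFaces R) :=
  PartialOrder.lift Subtype.val Subtype.val_injective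

/-- **Babson–Kozlov**: for graphs `G`, `H`, the simplicial complex `Hom₊(G,H)` is
isomorphic to the independence complex of the categorical product `G × ∁H`, where `∁H`
is the looped complement of `H` (adjacency `¬ H.Adj`); the isomorphism is an order
isomorphism of face posets. -/
theorem homPlus_iso_independenceComplex {V W : Type*} (G : SimpleGraph V)
    (H : SimpleGraph W) :
    Nonempty (HomPlusFaces G.Adj H.Adj ≃o
      IndFaces (fun p q : V × W => G.Adj p.1 q.1 ∧ ¬H.Adj p.2 q.2)) := by
  refine ⟨{
    toFun := fun η => ⟨{p : V × W | p.2 ∈ η.1 p.1}, ?_, ?_⟩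
    invFun := fun s => ⟨fun v => {w | (v, w) ∈ s.1}, ?_, ?_⟩
    left_inv := ?_
    right_inv := ?_
    map_rel_iff' := ?_ }⟩
  · obtain ⟨v, w, hw⟩ := η.2.1
    exact ⟨(v, w), hw⟩
  · rintro ⟨x, a⟩ ha ⟨y, b⟩ hb ⟨hG, hH⟩
    exact hH (η.2.2 hG a ha b hb)
  · obtain ⟨⟨v, w⟩, hp⟩ := s.2.1
    exact ⟨v, w, hp⟩
  · intro x y hxy a ha b hb
    by_contra h
    exact s.2.2 (x, a) ha (y, b) hb ⟨hxy, h⟩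
  · intro η; rfl
  · intro s; rfl
  · intro η₁ η₂
    constructor
    · intro h v w hw
      exact h (show (v, w) ∈ _ from hw)
    · intro h p hp
      exact h p.1 hp
end

section
/- For any graph G and n ≥ 1, the simplicial complex Hom₊(G, K_n) is isomorphic to the n-fold simplicial join Ind(G) * Ind(G) * ... * Ind(G) of the independence complex of G. -/
/-- The face poset of the `n`-fold simplicial join `Ind(G) * ⋯ * Ind(G)` of the
independence complex of a graph `G`: nonempty subsets of `V × Fin n` each of whose
slices is an independent set of `G`. -/
def IndJoinFaces {V : Type*} (G : SimpleGraph V) (n : ℕ) : Type _ :=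
  {s : Set (V × Fin n) // s.Nonempty ∧
    ∀ i : Fin n, ∀ a, (a, i) ∈ s → ∀ b, (b, i) ∈ s → ¬G.Adj a b}

instance {V : Type*} (G : SimpleGraph V) (n : ℕ) : PartialOrder (IndJoinFaces G n) :=
  PartialOrder.lift Subtype.val Subtype.val_injective

/-- **Babson–Kozlov**: for any graph `G` and `n ≥ 1`, the simplicial complex
`Hom₊(G,K_n)` is isomorphic to the `n`-fold simplicial join `Ind(G) * ⋯ * Ind(G)`
of the independence complex of `G`. -/
theorem homPlus_iso_join_independenceComplex {V : Type*} (G : SimpleGraph V) (n : ℕ)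
    (hn : 1 ≤ n) :
    Nonempty (HomPlusFaces G.Adj (⊤ : SimpleGraph (Fin n)).Adj ≃o IndJoinFaces G n) := by

  refine ⟨{
    toFun := fun η => ⟨{p | p.2 ∈ η.1 p.1}, ?_, ?_⟩
    invFun := fun s => ⟨fun v => {i | (v, i) ∈ s.1}, ?_, ?_⟩
    left_inv := fun η => rfl
    right_inv := fun s => rfl
    map_rel_iff' := ?_ }⟩
  · obtain ⟨v, i, hi⟩ := η.2.1
    exact ⟨(v, i), hi⟩
  · intro i a ha b hb hab
    exact η.2.2 hab i ha i hb rfl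
  · obtain ⟨⟨v, i⟩, h⟩ := s.2.1
    exact ⟨v, i, h⟩
  · intro x y hxy a ha b hb
    rintro rfl
    exact s.2.2 a x ha y hb hxy
  · intro η η'
    constructor
    · intro h v i hi
      exact h (show ((v, i) : V × Fin n) ∈ _ from hi)
    · intro h p hp
      exact h p.1 hp
end
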